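/- Let 0 → Δ → A ⊕ B → Z → 0 be an exact sequence of G-modules where Δ embeds diagonally, and let ι : A → Z be the induced map. Then the visible subgroup Vis_Z H¹(G, A) := ker(ι_* : H¹(G,A) → H¹(G,Z)) is a subgroup of H¹(G,A) annihilated by |Δ| whenever Δ is finite of order d; that is, every element of Vis_Z H¹(G,A) is killed by multiplication by d. -/
import Mathlib


variable {G : Type*} [Group G]

/-- A 1-cocycle of a group `G` with coefficients in a `G`-module `M`. -/
def IsOneCocycle {M : Type*} [AddCommGroup M] [DistribMulAction G M]
    (f : G → M) : Prop :=
  ∀ g h : G, f (g * h) = g • f h + f g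

/-- A 1-coboundary of a group `G` with coefficients in a `G`-module `M`. -/
def IsOneCoboundary {M : Type*} [AddCommGroup M] [DistribMulAction G M]
    (f : G → M) : Prop :=
  ∃ m : M, ∀ g : G, f g = g • m - m

/-- Let `Δ` be a finite `G`-module of order `d` embedded `G`-equivariantly in the
`G`-modules `A` and `B`, and let `Z = (A ⊕ B)/Δ` with `Δ` embedded diagonally, i.e.
`π : A × B → Z` is a surjective `G`-map with kernel the diagonal image of `Δ`.
Let `ι : A → Z` be the induced map `a ↦ π(a, 0)`. Then every class in the visible
subgroup `Vis_Z H¹(G, A) = ker(ι_* : H¹(G,A) → H¹(G,Z))` is killed by `d`: any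
1-cocycle `f : G → A` such that `ι ∘ f` is a 1-coboundary in `Z` has `d • f` a
1-coboundary in `A`. -/
theorem visible_subgroup_annihilated_by_card
    {Δ A B Z : Type*} [AddCommGroup Δ] [AddCommGroup A] [AddCommGroup B]
    [AddCommGroup Z] [DistribMulAction G Δ] [DistribMulAction G A]
    [DistribMulAction G B] [DistribMulAction G Z] [Finite Δ] (d : ℕ)
    (hd : d = Nat.card Δ)
    (ιA : Δ →+ A) (ιB : Δ →+ B) (hιA : Function.Injective ιA)
    (hιB : Function.Injective ιB)
    (hιAeq : ∀ (g : G) (x : Δ), ιA (g • x) = g • ιA x)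
    (hιBeq : ∀ (g : G) (x : Δ), ιB (g • x) = g • ιB x)
    (π : A × B →+ Z) (hπsurj : Function.Surjective π)
    (hπeq : ∀ (g : G) (x : A × B), π (g • x) = g • π x)
    (hker : ∀ x : A × B, π x = 0 ↔ ∃ δ : Δ, x = (ιA δ, ιB δ))
    (f : G → A) (hf : IsOneCocycle (G := G) f)
    (hvis : IsOneCoboundary (G := G) (fun g => π (f g, 0))) :
    IsOneCoboundary (G := G) (fun g => d • f g) := by
  obtain ⟨z, hz⟩ := hvis
  obtain ⟨⟨a, b⟩, rfl⟩ := hπsurj z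
  refine ⟨d • a, fun g => ?_⟩
  have hzg : π (f g, 0) = g • π (a, b) - π (a, b) := hz g
  have hzero : π ((f g, 0) - (g • (a, b) - (a, b))) = 0 := by
    rw [map_sub, map_sub, hπeq, hzg, sub_self]
  obtain ⟨δ, hδ⟩ := (hker _).mp hzero
  have h1 : f g - (g • a - a) = ιA δ := congrArg Prod.fst hδ
  have h1' : f g = g • a - a + ιA δ := by rw [← h1]; abel
  have hδ0 : d • δ = 0 := by rw [hd]; exact card_nsmul_eq_zero'
  have hcomm : d • g • a = g • d • a :=
    (map_nsmul (DistribMulAction.toAddMonoidHom A g) d a).symm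
  show d • f g = g • d • a - d • a
  rw [h1', nsmul_add, ← map_nsmul, hδ0, map_zero, add_zero, nsmul_sub, hcomm]
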